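/- For all m ≥ 1, l ≥ 0 with (m,l) ≠ (1,0), the number A^0_{m,l} := (-1)^{l+m-1} · m! · m^{l-1} satisfies the identity ∑_{l'=0}^{l} ∑_{p=1}^{m} C(l,l') · A^0_{p,l'} · S(m,p) · p^{l-l'} = 0, where A^0_{1,0} = 1 is included in the sum, S is the Stirling number of the second kind and C the binomial coefficient. -/

import Mathlib

/-- Stirling numbers of the second kind. -/
def stirling : ℕ → ℕ → ℕ
  | 0, 0 => 1
  | 0, _ + 1 => 0
  | _ + 1, 0 => 0
  | n + 1, k + 1 => (k + 1) * stirling n (k + 1) + stirling n k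

/-- The genus-zero Koszul hierarchy coefficient
`A^0_{m,l} = (-1)^{l+m-1} · m! · m^{l-1}`; for `m ≥ 1` this equals
`(-1)^{l+m-1} · (m-1)! · m^l`, which avoids the negative exponent when `l = 0`.
In particular `A^0_{1,0} = 1`. -/
def A0 (m l : ℕ) : ℤ :=
  (-1 : ℤ) ^ (l + m - 1) * (Nat.factorial (m - 1) : ℤ) * (m : ℤ) ^ l

/-!
Since `A0 p l = A0 p 0 * (-p) ^ l`, the binomial theorem collapses the sum over `l'` to
`A0 p 0 * (-p + p) ^ l`, which vanishes for `l ≥ 1`. For `l = 0` what remains is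
`∑ p, (-1) ^ (p - 1) * (p - 1)! * S(m, p)`, and the recurrence
`S(n+1, q+1) = (q+1) S(n, q+1) + S(n, q)` makes it telescope to `0` for `m ≥ 2`.
-/

open Finset Nat

lemma stirling_eq_zero_of_lt {n k : ℕ} (h : n < k) : stirling n k = 0 := by
  induction n generalizing k with
  | zero => obtain ⟨k, rfl⟩ := exists_eq_succ_of_ne_zero (by omega : k ≠ 0); rfl
  | succ n ih =>
    obtain ⟨k, rfl⟩ := exists_eq_succ_of_ne_zero (by omega : k ≠ 0)
    simp [stirling, ih (by omega : n < k + 1), ih (by omega : n < k)]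

lemma sum_range_neg_one_pow_mul_factorial_mul_stirling_succ {n : ℕ} (hn : n ≠ 0) :
    ∑ q ∈ range (n + 1), (-1 : ℤ) ^ q * q ! * stirling (n + 1) (q + 1) = 0 := by
  set g : ℕ → ℤ := fun q ↦ (-1) ^ q * q ! * stirling n q
  have hterm (q : ℕ) : (-1 : ℤ) ^ q * q ! * stirling (n + 1) (q + 1) = g q - g (q + 1) := by
    simp only [g, stirling, factorial_succ, pow_succ]; push_cast; ring
  obtain ⟨n, rfl⟩ := exists_eq_succ_of_ne_zero hn
  simp only [hterm, sum_range_sub', g, stirling_eq_zero_of_lt (lt_add_one (n + 1))]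
  simp [stirling]

lemma sum_Icc_A0_zero_mul_stirling {m : ℕ} (hm : m ≠ 1) :
    ∑ p ∈ Icc 1 m, A0 p 0 * stirling m p = 0 := by
  rcases m with _ | n
  · simp
  rw [← sum_range_neg_one_pow_mul_factorial_mul_stirling_succ (by omega : n ≠ 0),
    ← Ico_add_one_right_eq_Icc, range_eq_Ico, ← sum_Ico_add' _ 0 (n + 1) 1]
  simp [A0]

lemma A0_eq_mul_neg_pow {p : ℕ} (hp : p ≠ 0) (l : ℕ) :
    A0 p l = A0 p 0 * (-(p : ℤ)) ^ l := by
  rw [A0, A0, show l + p - 1 = l + (p - 1) by omega, zero_add, pow_add, neg_pow]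
  ring

lemma sum_range_choose_mul_A0_mul_pow {p : ℕ} (hp : p ≠ 0) (l : ℕ) :
    ∑ l' ∈ range (l + 1), (l.choose l' : ℤ) * A0 p l' * (p : ℤ) ^ (l - l') =
      A0 p 0 * 0 ^ l :=
  calc _ = A0 p 0 * ∑ l' ∈ range (l + 1),
          (-(p : ℤ)) ^ l' * (p : ℤ) ^ (l - l') * l.choose l' := by
        rw [mul_sum]; refine sum_congr rfl fun l' _ ↦ ?_; rw [A0_eq_mul_neg_pow hp]; ring
    _ = A0 p 0 * 0 ^ l := by rw [← add_pow, neg_add_cancel]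

theorem A0_recursion_general (m l : ℕ) (hml : (m, l) ≠ (1, 0)) :
    ∑ l' ∈ Finset.range (l + 1), ∑ p ∈ Finset.Icc 1 m,
      (Nat.choose l l' : ℤ) * A0 p l' * (stirling m p : ℤ) * (p : ℤ) ^ (l - l') = 0 := by
  have hinner : ∀ p ∈ Icc 1 m, ∑ l' ∈ range (l + 1),
      (l.choose l' : ℤ) * A0 p l' * stirling m p * (p : ℤ) ^ (l - l') =
        A0 p 0 * stirling m p * 0 ^ l := fun p hp ↦ by
    rw [mul_right_comm, ← sum_range_choose_mul_A0_mul_pow (by grind) l, mul_comm, mul_sum]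
    exact sum_congr rfl fun _ _ ↦ by ring
  rw [sum_comm, sum_congr rfl hinner, ← sum_mul]
  rcases l with _ | l
  · rw [sum_Icc_A0_zero_mul_stirling (by simpa using hml), zero_mul]
  · rw [zero_pow (succ_ne_zero l), mul_zero]

/-- For all `m ≥ 1`, `l ≥ 0` with `(m,l) ≠ (1,0)`, the coefficients `A^0` satisfy
`∑_{l'=0}^{l} ∑_{p=1}^{m} C(l,l') · A^0_{p,l'} · S(m,p) · p^{l-l'} = 0`
(the term with `(p,l') = (1,0)`, where `A^0_{1,0} = 1`, being included). -/
theorem A0_recursion (m l : ℕ) (hm : 1 ≤ m) (hml : (m, l) ≠ (1, 0)) :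
    ∑ l' ∈ Finset.range (l + 1), ∑ p ∈ Finset.Icc 1 m,
      (Nat.choose l l' : ℤ) * A0 p l' * (stirling m p : ℤ) * (p : ℤ) ^ (l - l') = 0 :=
  A0_recursion_general m l hml
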